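/- arXiv:math/0504096 — 2 statements merged into one kernel-verified Lean document; each statement's English description precedes it below -/
import Mathlib

section
/- Let D, D_1, D_2, … be i.i.d. positive-integer-valued random variables with 0 < P(D is even) < 1. If E[D] < ∞, then lim_{n→∞} P((D_1, …, D_n) is graphical) = 1/2. -/
open MeasureTheory ProbabilityTheory Filter

/-- A finite sequence `d 0, …, d (n-1)` of integers is *graphical* if there exists a simple
graph on `n` vertices whose vertex degrees are exactly `d 0, …, d (n-1)`. -/
def Graphical (n : ℕ) (d : ℕ → ℕ) : Prop :=
  ∃ G : SimpleGraph (Fin n), ∀ v : Fin n, (G.neighborSet v).ncard = d (v : ℕ)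

/-!
A graphical sequence has even sum, and `P(D_1 + ⋯ + D_n even) = (1 + E[(-1)^D]^n) / 2 → 1/2`
because `|E[(-1)^D]| < 1`. Conversely, an even sequence of positive integers is graphical as soon
as `n ≥ 4K(K+1)` and the entries larger than `K` sum to at most `n/4`: laying these entries off
one at a time onto distinct other vertices (Havel–Hakimi) leaves a sequence whose maximum `Δ` and
sum `S` satisfy `Δ(Δ+1) ≤ S`, and such sequences are graphical by induction on `S`. Integrability
gives a `K` with `E[D; D > K] < 1/4`, and the strong law of large numbers then makes the entries
larger than `K` sum to at most `n/4` with probability tending to one.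
-/

open Finset

namespace SimpleGraph

variable {V : Type*}

def IsGraphic (d : V → ℕ) : Prop :=
  ∃ G : SimpleGraph V, ∀ v, (G.neighborSet v).ncard = d v

section LayOff

variable [DecidableEq V]

/-- Havel–Hakimi's laying off of `v` onto `A`. -/
def layOff (d : V → ℕ) (v : V) (A : Finset V) (i : V) : ℕ :=
  if i = v then 0 else if i ∈ A then d i - 1 else d i

variable {d : V → ℕ} {v : V} {A : Finset V}

@[simp] lemma layOff_self : layOff d v A v = 0 := if_pos rfl

lemma layOff_of_mem {i : V} (hi : i ∈ A) (hiv : i ≠ v) : layOff d v A i = d i - 1 := by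
  simp [layOff, hiv, hi]

lemma layOff_of_notMem {i : V} (hi : i ∉ A) (hiv : i ≠ v) : layOff d v A i = d i := by
  simp [layOff, hiv, hi]

lemma layOff_le (i : V) : layOff d v A i ≤ d i := by
  unfold layOff
  split_ifs <;> omega

end LayOff

variable [Fintype V] {d : V → ℕ}

lemma IsGraphic.even_sum (h : IsGraphic d) : Even (∑ i, d i) := by
  classical
  obtain ⟨G, hG⟩ := h
  have hdeg : ∀ i, d i = G.degree i := fun i => by
    rw [← hG i, ← card_neighborSet_eq_degree, Set.ncard_eq_toFinset_card', Set.toFinset_card]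
  simp_rw [hdeg, sum_degrees_eq_twice_card_edges]
  exact even_two_mul _

lemma isGraphic_of_sum_eq_zero (h : ∑ i, d i = 0) : IsGraphic d :=
  ⟨⊥, fun v => by simp [(sum_eq_zero_iff.mp h) v (mem_univ v)]⟩

def IsAmple (b : ℕ) (d : V → ℕ) : Prop :=
  Even (∑ i, d i) ∧ (∀ i, d i ≤ b) ∧ b * (b + 1) ≤ ∑ i, d i

def HasAmpleReduction (d : V → ℕ) : Prop :=
  ∃ d' : V → ℕ, ∃ b, IsAmple b d' ∧ ∑ i, d' i < ∑ i, d i ∧ (IsGraphic d' → IsGraphic d)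

lemma HasAmpleReduction.trans {d' : V → ℕ} (h : HasAmpleReduction d')
    (hlt : ∑ i, d' i < ∑ i, d i) (hd : IsGraphic d' → IsGraphic d) : HasAmpleReduction d := by
  obtain ⟨d'', b, hb, hlt', hd'⟩ := h
  exact ⟨d'', b, hb, hlt'.trans hlt, hd ∘ hd'⟩

lemma IsAmple.lt_card_filter_pos {b : ℕ} (h : IsAmple b d) (hb : 0 < b) :
    b < #(univ.filter (0 < d ·)) := by
  have hsum : ∑ i, d i ≤ #(univ.filter (0 < d ·)) * b := by
    rw [← sum_filter_of_ne fun i _ hi => Nat.pos_of_ne_zero hi, ← smul_eq_mul]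
    exact sum_le_card_nsmul _ _ _ fun i _ => h.2.1 i
  have := h.2.2
  by_contra! hcon
  nlinarith

lemma card_filter_eq_mul_le_sum (Δ : ℕ) : #(univ.filter (d · = Δ)) * Δ ≤ ∑ i, d i := by
  rw [← smul_eq_mul, ← sum_const, ← sum_congr rfl fun i hi => (mem_filter.mp hi).2]
  exact sum_le_sum_of_subset (subset_univ _)

variable [DecidableEq V] {v : V} {A : Finset V}

lemma IsGraphic.of_layOff (hA : A ⊆ (univ.filter (0 < d ·)).erase v) (hcard : #A = d v)
    (h : IsGraphic (layOff d v A)) : IsGraphic d := by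
  obtain ⟨G, hG⟩ := h
  have hGv : ∀ y, ¬ G.Adj v y := fun y hy => by
    have := (Set.ncard_eq_zero (Set.toFinite _)).mp ((hG v).trans layOff_self)
    exact this.subset (show y ∈ G.neighborSet v from hy)
  set H := G ⊔ fromRel (fun x y => x = v ∧ y ∈ A)
  refine ⟨H, fun u => ?_⟩
  by_cases huv : u = v
  · have : H.neighborSet u = A := by
      ext y
      have := hGv y
      simp only [H, mem_neighborSet, sup_adj, fromRel_adj]
      grind
    rw [this, Set.ncard_coe_finset, hcard, huv]
  by_cases huA : u ∈ A
  · have : H.neighborSet u = insert v (G.neighborSet u) := by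
      ext y
      simp only [H, mem_neighborSet, sup_adj, fromRel_adj, Set.mem_insert_iff]
      grind
    rw [this, Set.ncard_insert_of_notMem (fun h => hGv u h.symm), hG, layOff_of_mem huA huv]
    have := (mem_filter.mp (mem_of_mem_erase (hA huA))).2
    omega
  · have : H.neighborSet u = G.neighborSet u := by
      ext y
      simp only [H, mem_neighborSet, sup_adj, fromRel_adj]
      grind
    rw [this, hG, layOff_of_notMem huA huv]

lemma sum_layOff (hA : A ⊆ (univ.filter (0 < d ·)).erase v) (hcard : #A = d v) :
    ∑ i, layOff d v A i + 2 * d v = ∑ i, d i := by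
  have hpoint : ∀ i, layOff d v A i + ((if i = v then d v else 0) + if i ∈ A then 1 else 0)
      = d i := by
    intro i
    by_cases hiv : i = v
    · have hvA : v ∉ A := fun h => by simpa using hA h
      simp [hiv, hvA]
    by_cases hiA : i ∈ A
    · have := (mem_filter.mp (mem_of_mem_erase (hA hiA))).2
      simp only [layOff, hiv, hiA, if_true, if_false]
      omega
    · simp [layOff, hiv, hiA]
  rw [← sum_congr rfl fun i _ => hpoint i, sum_add_distrib, sum_add_distrib, sum_ite_eq',
    sum_boole, filter_mem_eq_inter, univ_inter]
  simp [hcard]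
  ring

lemma even_sum_layOff (hEven : Even (∑ i, d i)) (hA : A ⊆ (univ.filter (0 < d ·)).erase v)
    (hcard : #A = d v) : Even (∑ i, layOff d v A i) := by
  rw [← sum_layOff hA hcard] at hEven
  exact (Nat.even_add.mp hEven).mpr (even_two_mul _)

lemma hasAmpleReduction_of_layOff (hEven : Even (∑ i, d i))
    (hA : A ⊆ (univ.filter (0 < d ·)).erase v) (hcard : #A = d v) (hv : 0 < d v) {b : ℕ}
    (hb : ∀ i, layOff d v A i ≤ b) (hS : b * (b + 1) + 2 * d v ≤ ∑ i, d i) :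
    HasAmpleReduction d := by
  have hsum := sum_layOff hA hcard
  exact ⟨layOff d v A, b, ⟨even_sum_layOff hEven hA hcard, hb, by omega⟩, by omega,
    IsGraphic.of_layOff hA hcard⟩

lemma IsAmple.le_card_erase {Δ : ℕ} (h : IsAmple Δ d) (hv : d v = Δ) (hΔ : 0 < Δ) :
    Δ ≤ #((univ.filter (0 < d ·)).erase v) := by
  rw [card_erase_of_mem (by simp [hv, hΔ])]
  have := h.lt_card_filter_pos hΔ
  omega

lemma IsAmple.hasAmpleReduction_of_large_sum {Δ : ℕ} (h : IsAmple Δ d) (hv : d v = Δ)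
    (hΔ : 0 < Δ) (hS : Δ * Δ + 3 * Δ ≤ ∑ i, d i) : HasAmpleReduction d := by
  obtain ⟨A, hA, hcard⟩ := exists_subset_card_eq (h.le_card_erase hv hΔ)
  refine hasAmpleReduction_of_layOff h.1 hA (hcard.trans hv.symm) (hv ▸ hΔ) (b := Δ)
    (fun i => (layOff_le i).trans (h.2.1 i)) ?_
  linarith

lemma IsAmple.hasAmpleReduction_of_few_max {Δ : ℕ} (h : IsAmple Δ d) (hv : d v = Δ)
    (hΔ : 0 < Δ) (hM : #((univ.filter (d · = Δ)).erase v) ≤ Δ) : HasAmpleReduction d := by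
  have hMP : (univ.filter (d · = Δ)).erase v ⊆ (univ.filter (0 < d ·)).erase v :=
    erase_subset_erase _ fun i hi => by simp_all
  obtain ⟨A, hMA, hA, hcard⟩ := exists_subsuperset_card_eq hMP hM (h.le_card_erase hv hΔ)
  refine hasAmpleReduction_of_layOff h.1 hA (hcard.trans hv.symm) (hv ▸ hΔ) (b := Δ - 1)
    (fun i => ?_) ?_
  · by_cases hiv : i = v
    · simp [hiv]
    by_cases hiA : i ∈ A
    · rw [layOff_of_mem hiA hiv]
      have := h.2.1 i
      omega
    · have : d i ≠ Δ := fun hi => hiA (hMA (by simp [hiv, hi]))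
      have := h.2.1 i
      rw [layOff_of_notMem hiA hiv]
      omega
  · have := h.2.2
    rw [hv]
    obtain ⟨e, rfl⟩ : ∃ e, Δ = e + 1 := ⟨Δ - 1, by omega⟩
    simp only [Nat.add_sub_cancel]
    nlinarith

lemma card_filter_eq_eq_add_two {Δ : ℕ} (hv : d v = Δ)
    (hM : Δ < #((univ.filter (d · = Δ)).erase v)) (hS : ∑ i, d i < Δ * Δ + 3 * Δ) :
    #(univ.filter (d · = Δ)) = Δ + 2 := by
  rw [card_erase_of_mem (by simp [hv])] at hM
  have := card_filter_eq_mul_le_sum (d := d) Δ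
  by_contra hne
  have : (Δ + 3) * Δ ≤ #(univ.filter (d · = Δ)) * Δ := Nat.mul_le_mul_right Δ (by omega)
  nlinarith

/-- Parity is what excludes an entry `Δ - 1` here. -/
lemma IsAmple.sum_filter_ne_add_two_le {Δ : ℕ} (h : IsAmple Δ d) (hv : d v = Δ)
    (hM : Δ < #((univ.filter (d · = Δ)).erase v)) (hS : ∑ i, d i < Δ * Δ + 3 * Δ) :
    ∑ i ∈ univ.filter (d · ≠ Δ), d i + 2 ≤ Δ := by
  set t := ∑ i ∈ univ.filter (d · ≠ Δ), d i
  have hsplit : (Δ + 2) * Δ + t = ∑ i, d i := by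
    rw [← card_filter_eq_eq_add_two hv hM hS, ← sum_filter_add_sum_filter_not univ (d · = Δ),
      sum_congr rfl fun i hi => (mem_filter.mp hi).2, sum_const, smul_eq_mul]
  have hlt : t < Δ := by nlinarith
  have hEven : Even (Δ * (Δ + 1) + (t + Δ)) := by
    convert h.1 using 1
    rw [← hsplit]
    ring
  obtain ⟨k, hk⟩ := (Nat.even_add.mp hEven).mp (Nat.even_mul_succ_self Δ)
  omega

lemma layOff_layOff_le {Δ : ℕ} {w : V} (hA : ∀ i, i ∈ A ↔ i ≠ w ∧ i ≠ v ∧ d i = Δ)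
    (hsmall : ∑ i ∈ univ.filter (d · ≠ Δ), d i + 2 ≤ Δ) (i : V) :
    layOff (layOff d v A) w A i ≤ Δ - 2 := by
  by_cases hiw : i = w
  · simp [hiw]
  by_cases hiA : i ∈ A
  · have := (hA i).mp hiA
    rw [layOff_of_mem hiA hiw, layOff_of_mem hiA this.2.1]
    omega
  rw [layOff_of_notMem hiA hiw]
  by_cases hiv : i = v
  · simp [hiv]
  rw [layOff_of_notMem hiA hiv]
  have hne : d i ≠ Δ := fun hi => hiA ((hA i).mpr ⟨hiw, hiv, hi⟩)
  have : d i ≤ ∑ j ∈ univ.filter (d · ≠ Δ), d j :=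
    single_le_sum (fun j _ => Nat.zero_le (d j)) (mem_filter.mpr ⟨mem_univ i, hne⟩)
  omega

/-- Exactly `Δ + 2` entries equal `Δ`; two of them are laid off onto the other `Δ`. -/
lemma IsAmple.hasAmpleReduction_of_sum_lt {Δ : ℕ} (h : IsAmple Δ d) (hv : d v = Δ)
    (hM : Δ < #((univ.filter (d · = Δ)).erase v)) (hS : ∑ i, d i < Δ * Δ + 3 * Δ) :
    HasAmpleReduction d := by
  have hsmall := h.sum_filter_ne_add_two_le hv hM hS
  have hcardM := card_filter_eq_eq_add_two hv hM hS
  obtain ⟨w, hw⟩ : ((univ.filter (d · = Δ)).erase v).Nonempty := card_pos.mp (by omega)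
  set A := ((univ.filter (d · = Δ)).erase v).erase w
  have hcardA : #A = Δ := by
    rw [card_erase_of_mem hw, card_erase_of_mem (by simp [hv])]
    omega
  have hwv : w ≠ v := (mem_erase.mp hw).1
  have hdw : d w = Δ := by simpa using (mem_erase.mp hw).2
  have hmemA : ∀ i, i ∈ A ↔ i ≠ w ∧ i ≠ v ∧ d i = Δ := by simp [A]
  have hA : A ⊆ (univ.filter (0 < d ·)).erase v := fun i hi => by
    simp only [mem_erase, mem_filter, mem_univ, true_and]
    grind
  have hsum := sum_layOff hA (hcardA.trans hv.symm)
  have hdw₁ : layOff d v A w = Δ := by rw [layOff_of_notMem (by simp [hmemA]) hwv, hdw]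
  have hA₁ : A ⊆ (univ.filter (0 < layOff d v A ·)).erase w := fun i hi => by
    have := (hmemA i).mp hi
    simp only [mem_erase, mem_filter, mem_univ, true_and, layOff_of_mem hi this.2.1]
    exact ⟨this.1, by omega⟩
  refine (hasAmpleReduction_of_layOff (even_sum_layOff h.1 hA (hcardA.trans hv.symm)) hA₁
    (hcardA.trans hdw₁.symm) (by omega) (layOff_layOff_le hmemA hsmall) ?_).trans
    (by omega) (IsGraphic.of_layOff hA (hcardA.trans hv.symm))
  have := card_filter_eq_mul_le_sum (d := d) Δ
  rw [hcardM] at this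
  obtain ⟨e, rfl⟩ : ∃ e, Δ = e + 2 := ⟨Δ - 2, by omega⟩
  simp only [Nat.add_sub_cancel]
  nlinarith

/-- Lay off a vertex of maximum degree `Δ`; when the sum is below `Δ² + 3Δ` and more than `Δ + 1`
entries equal `Δ`, one lay-off would not decrease the maximum, so two are needed. -/
lemma IsAmple.hasAmpleReduction {b : ℕ} (h : IsAmple b d) (hS : 0 < ∑ i, d i) :
    HasAmpleReduction d := by
  obtain ⟨i, -, hi⟩ := exists_ne_zero_of_sum_ne_zero hS.ne'
  obtain ⟨v, -, hv⟩ := exists_mem_eq_sup univ ⟨i, mem_univ i⟩ d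
  have hle : ∀ j, d j ≤ univ.sup d := fun j => le_sup (mem_univ j)
  have hb : univ.sup d ≤ b := Finset.sup_le fun j _ => h.2.1 j
  have hΔ : IsAmple (univ.sup d) d := ⟨h.1, hle, (Nat.mul_le_mul hb (by omega)).trans h.2.2⟩
  have hpos : 0 < univ.sup d := lt_of_lt_of_le (Nat.pos_of_ne_zero hi) (hle i)
  by_cases hlarge : univ.sup d * univ.sup d + 3 * univ.sup d ≤ ∑ i, d i
  · exact hΔ.hasAmpleReduction_of_large_sum hv.symm hpos hlarge
  by_cases hfew : #((univ.filter (d · = univ.sup d)).erase v) ≤ univ.sup d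
  · exact hΔ.hasAmpleReduction_of_few_max hv.symm hpos hfew
  · exact hΔ.hasAmpleReduction_of_sum_lt hv.symm (by omega) (by omega)

theorem IsAmple.isGraphic {b : ℕ} (h : IsAmple b d) : IsGraphic d := by
  induction hS : ∑ i, d i using Nat.strong_induction_on generalizing d b with
  | _ S ih =>
    rcases Nat.eq_zero_or_pos S with rfl | hpos
    · exact isGraphic_of_sum_eq_zero hS
    obtain ⟨d', b', hd', hlt, hreduce⟩ := h.hasAmpleReduction (hS ▸ hpos)
    exact hreduce (ih _ (hS ▸ hlt) hd' rfl)

theorem isGraphic_of_bounded_outside {K : ℕ} (B : Finset V) (d : V → ℕ)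
    (hEven : Even (∑ i, d i)) (hK : ∀ i ∉ B, d i ≤ K)
    (hcount : ∑ i ∈ B, d i ≤ #(univ.filter fun i => i ∉ B ∧ 0 < d i))
    (hS : K * (K + 1) + 2 * ∑ i ∈ B, d i ≤ ∑ i, d i) : IsGraphic d := by
  induction B using Finset.induction_on generalizing d with
  | empty => exact IsAmple.isGraphic ⟨hEven, fun i => hK i (notMem_empty i), by simpa using hS⟩
  | @insert b B hbB ih =>
    set F := univ.filter fun i => i ∉ insert b B ∧ 0 < d i
    rw [sum_insert hbB] at hcount hS
    obtain ⟨A, hAF, hcard⟩ := exists_subset_card_eq (show d b ≤ #F by omega)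
    have hA : A ⊆ (univ.filter (0 < d ·)).erase b := fun i hi => by
      have := (mem_filter.mp (hAF hi)).2
      simp only [mem_erase, mem_filter, mem_univ, true_and]
      exact ⟨fun h => this.1 (h ▸ mem_insert_self b B), this.2⟩
    have hsum := sum_layOff hA hcard
    have hB : ∑ i ∈ B, layOff d b A i = ∑ i ∈ B, d i := sum_congr rfl fun i hi =>
      layOff_of_notMem (fun h => (mem_filter.mp (hAF h)).2.1 (mem_insert_of_mem hi))
        (fun h => hbB (h ▸ hi))
    have hFA : F \ A ⊆ univ.filter fun i => i ∉ B ∧ 0 < layOff d b A i := fun i hi => by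
      obtain ⟨hiF, hiA⟩ := mem_sdiff.mp hi
      have := (mem_filter.mp hiF).2
      have hib : i ≠ b := fun h => this.1 (h ▸ mem_insert_self b B)
      simp only [mem_filter, mem_univ, true_and, layOff_of_notMem hiA hib]
      exact ⟨fun h => this.1 (mem_insert_of_mem h), this.2⟩
    refine IsGraphic.of_layOff hA hcard
      (ih _ (even_sum_layOff hEven hA hcard) (fun i hi => ?_) ?_ (by omega))
    · by_cases hib : i = b
      · simp [hib]
      · exact (layOff_le i).trans (hK i (by simp [hib, hi]))
    · have := le_card_sdiff A F
      have := card_le_card hFA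
      omega

theorem isGraphic_of_four_mul_le_card {K : ℕ} (d : V → ℕ) (hpos : ∀ i, 0 < d i)
    (hEven : Even (∑ i, d i)) (hlarge : 4 * ∑ i ∈ univ.filter (K < d ·), d i ≤ Fintype.card V)
    (hK : 4 * (K * (K + 1)) ≤ Fintype.card V) : IsGraphic d := by
  set B := univ.filter (K < d ·)
  have hcardB : #B ≤ ∑ i ∈ B, d i := by
    rw [card_eq_sum_ones]
    exact sum_le_sum fun i _ => hpos i
  have hcard : Fintype.card V ≤ ∑ i, d i := by
    rw [← card_univ, card_eq_sum_ones]
    exact sum_le_sum fun i _ => hpos i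
  have hcompl : univ.filter (fun i => i ∉ B ∧ 0 < d i) = univ \ B := by
    ext i
    simp [B, hpos i]
  refine isGraphic_of_bounded_outside B d hEven (fun i hi => by simpa [B] using hi) ?_ (by omega)
  rw [hcompl, card_sdiff_of_subset (subset_univ B), card_univ]
  omega

end SimpleGraph

open Finset SimpleGraph Topology

lemma Graphical.even_sum {n : ℕ} {d : ℕ → ℕ} (h : Graphical n d) :
    Even (∑ i ∈ range n, d i) := by
  rw [← Fin.sum_univ_eq_sum_range]
  exact IsGraphic.even_sum h

lemma graphical_of_four_mul_le {n K : ℕ} (d : ℕ → ℕ) (hpos : ∀ i, 0 < d i)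
    (hEven : Even (∑ i ∈ range n, d i))
    (hlarge : 4 * ∑ i ∈ range n, (if K < d i then d i else 0) ≤ n)
    (hK : 4 * (K * (K + 1)) ≤ n) : Graphical n d := by
  refine isGraphic_of_four_mul_le_card (K := K) (fun i : Fin n => d i) (fun i => hpos i)
    (by rwa [Fin.sum_univ_eq_sum_range d n]) ?_ (by simpa using hK)
  rw [sum_filter, Fin.sum_univ_eq_sum_range (fun i => if K < d i then d i else 0) n]
  simpa using hlarge

section Probability

variable {Ω : Type*} [MeasurableSpace Ω] {μ : Measure Ω}

lemma measureReal_even_eq [IsProbabilityMeasure μ] {X : Ω → ℕ} (hX : Measurable X) :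
    μ.real {ω | Even (X ω)} = (1 + ∫ ω, (-1 : ℝ) ^ X ω ∂μ) / 2 := by
  have hset : MeasurableSet {ω | Even (X ω)} := hX (Set.to_countable {k : ℕ | Even k}).measurableSet
  have hpow : (fun ω => (-1 : ℝ) ^ X ω) = fun ω => 2 * {ω | Even (X ω)}.indicator 1 ω - 1 := by
    ext ω
    rcases Nat.even_or_odd (X ω) with h | h
    · simp [h.neg_one_pow, Set.indicator_of_mem (show ω ∈ {ω | Even (X ω)} from h)]
      norm_num
    · simp [h.neg_one_pow, Set.indicator_of_notMem (show ω ∉ {ω | Even (X ω)} from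
        Nat.not_even_iff_odd.mpr h)]
  rw [hpow, integral_sub ((integrable_const _).indicator hset |>.const_mul 2) (integrable_const 1),
    integral_const_mul, integral_indicator_one hset]
  simp

lemma integral_neg_one_pow_sum [IsProbabilityMeasure μ] {D : ℕ → Ω → ℕ}
    (hmeas : ∀ i, Measurable (D i)) (hindep : iIndepFun D μ)
    (hident : ∀ i, IdentDistrib (D i) (D 0) μ μ) (n : ℕ) :
    ∫ ω, (-1 : ℝ) ^ (∑ i ∈ range n, D i ω) ∂μ = (∫ ω, (-1 : ℝ) ^ D 0 ω ∂μ) ^ n := by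
  have hsign : Measurable fun k : ℕ => (-1 : ℝ) ^ k := measurable_from_nat
  induction n with
  | zero => simp
  | succ n ih =>
    have hind : IndepFun (fun ω => (-1 : ℝ) ^ (∑ i ∈ range n, D i ω))
        (fun ω => (-1 : ℝ) ^ D n ω) μ := by
      simpa [Function.comp_def, Finset.sum_apply] using
        (hindep.indepFun_finsetSum_of_notMem hmeas (notMem_range_self (n := n))).comp hsign hsign
    have hDn := ((hident n).comp hsign).integral_eq
    simp only [Function.comp_def] at hDn
    simp_rw [sum_range_succ, pow_add]
    rw [hind.integral_fun_mul_eq_mul_integral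
      (hsign.comp (Finset.measurable_fun_sum _ fun i _ => hmeas i)).aestronglyMeasurable
      (hsign.comp (hmeas n)).aestronglyMeasurable, ih, hDn]
    ring

lemma tendsto_measure_even_sum [IsProbabilityMeasure μ] {D : ℕ → Ω → ℕ}
    (hmeas : ∀ i, Measurable (D i)) (hindep : iIndepFun D μ)
    (hident : ∀ i, IdentDistrib (D i) (D 0) μ μ)
    (h0 : 0 < μ {ω | Even (D 0 ω)}) (h1 : μ {ω | Even (D 0 ω)} < 1) :
    Tendsto (fun n => μ {ω | Even (∑ i ∈ range n, D i ω)}) atTop (𝓝 (1 / 2)) := by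
  set c := ∫ ω, (-1 : ℝ) ^ D 0 ω ∂μ
  have hq := measureReal_even_eq (μ := μ) (hmeas 0)
  have hq0 : 0 < μ.real {ω | Even (D 0 ω)} := ENNReal.toReal_pos h0.ne' (measure_ne_top _ _)
  have hq1 : μ.real {ω | Even (D 0 ω)} < 1 := by
    simpa [measureReal_def] using
      (ENNReal.toReal_lt_toReal (measure_ne_top _ _) ENNReal.one_ne_top).mpr h1
  have hc : |c| < 1 := abs_lt.mpr ⟨by linarith, by linarith⟩
  have hreal : ∀ n, μ.real {ω | Even (∑ i ∈ range n, D i ω)} = (1 + c ^ n) / 2 := fun n => by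
    rw [measureReal_even_eq (Finset.measurable_fun_sum _ fun i _ => hmeas i),
      integral_neg_one_pow_sum hmeas hindep hident]
  have hlim : Tendsto (fun n => (1 + c ^ n) / 2) atTop (𝓝 (1 / 2)) := by
    simpa using ((tendsto_pow_atTop_nhds_zero_of_abs_lt_one hc).const_add 1).div_const 2
  have := ENNReal.tendsto_ofReal hlim
  rw [ENNReal.ofReal_div_of_pos two_pos] at this
  simpa only [Function.comp_def, ← hreal, ofReal_measureReal (measure_ne_top _ _),
    ENNReal.ofReal_one, ENNReal.ofReal_ofNat] using this

lemma tendsto_measure_mul_lt_sum [IsFiniteMeasure μ] {X : ℕ → Ω → ℝ} (hmeas : ∀ i, Measurable (X i))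
    (hint : Integrable (X 0) μ) (hindep : Pairwise fun i j => X i ⟂ᵢ[μ] X j)
    (hident : ∀ i, IdentDistrib (X i) (X 0) μ μ) {c : ℝ} (hc : μ[X 0] < c) :
    Tendsto (fun n : ℕ => μ {ω | c * n < ∑ i ∈ range n, X i ω}) atTop (𝓝 0) := by
  have hsets : ∀ n : ℕ, MeasurableSet {ω | c * n < ∑ i ∈ range n, X i ω} := fun n =>
    measurableSet_lt measurable_const (Finset.measurable_fun_sum _ fun i _ => hmeas i)
  simpa using tendsto_measure_of_ae_tendsto_indicator_of_isFiniteMeasure atTop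
    MeasurableSet.empty hsets (by
      filter_upwards [strong_law_ae X hint hindep hident] with ω hω
      filter_upwards [hω.eventually (gt_mem_nhds hc), eventually_gt_atTop 0] with n hlt hn
      rw [smul_eq_mul, inv_mul_lt_iff₀ (by positivity)] at hlt
      simp only [Set.mem_empty_iff_false, iff_false, not_lt]
      linarith)

lemma exists_integral_ite_lt [IsFiniteMeasure μ] {X : Ω → ℕ} (hX : Measurable X)
    (hint : Integrable (fun ω => (X ω : ℝ)) μ) {ε : ℝ} (hε : 0 < ε) :
    ∃ K : ℕ, ∫ ω, ((if K < X ω then X ω else 0 : ℕ) : ℝ) ∂μ < ε := by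
  have hsets : ∀ K : ℕ, MeasurableSet {ω | K < X ω} := fun K => measurableSet_lt measurable_const hX
  have hs : Tendsto (fun K : ℕ => μ {ω | K < X ω}) atTop (𝓝 0) := by
    simpa using tendsto_measure_of_tendsto_indicator_of_isFiniteMeasure atTop μ hsets
      (A := ∅) fun ω => (eventually_ge_atTop (X ω)).mono fun K hK => by simp [hK]
  obtain ⟨K, hK⟩ := ((hint.tendsto_setIntegral_nhds_zero hs).eventually (gt_mem_nhds hε)).exists
  refine ⟨K, lt_of_eq_of_lt ?_ hK⟩
  rw [← integral_indicator (hsets K)]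
  congr with ω
  by_cases h : K < X ω <;> simp [h]

lemma exists_tendsto_measure_lt_four_mul_sum_ite [IsFiniteMeasure μ]
    {D : ℕ → Ω → ℕ} (hmeas : ∀ i, Measurable (D i))
    (hindep : iIndepFun D μ) (hident : ∀ i, IdentDistrib (D i) (D 0) μ μ)
    (hint : Integrable (fun ω => (D 0 ω : ℝ)) μ) :
    ∃ K : ℕ, Tendsto (fun n => μ {ω | n < 4 * ∑ i ∈ range n, if K < D i ω then D i ω else 0})
      atTop (𝓝 0) := by
  obtain ⟨K, hK⟩ := exists_integral_ite_lt (hmeas 0) hint (by norm_num : (0 : ℝ) < 1 / 4)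
  set φ : ℕ → ℝ := fun k => ((if K < k then k else 0 : ℕ) : ℝ)
  have hφ : Measurable φ := measurable_from_nat
  have hint' : Integrable (φ ∘ D 0) μ := hint.mono (hφ.comp (hmeas 0)).aestronglyMeasurable
    (ae_of_all _ fun ω => by by_cases h : K < D 0 ω <;> simp [φ, h])
  refine ⟨K, ?_⟩
  convert tendsto_measure_mul_lt_sum (fun i => hφ.comp (hmeas i)) hint'
    (fun i j hij => (hindep.indepFun hij).comp hφ hφ) (fun i => (hident i).comp hφ) hK
    using 3 with n
  ext ω
  simp only [Set.mem_ofPred_eq, Function.comp_apply, φ, ← Nat.cast_sum]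
  generalize (∑ i ∈ range n, if K < D i ω then D i ω else 0) = s
  rw [← Nat.cast_lt (α := ℝ)]
  push_cast
  constructor <;> intro h <;> linarith

end Probability

/-- Part (d), first case: if `D, D_1, D_2, …` are i.i.d. positive-integer-valued with
`0 < P(D even) < 1` and `E[D] < ∞`, then `P((D_1,…,D_n) graphical) → 1/2`. -/
theorem graphical_tendsto_half_of_integrable {Ω : Type*} [MeasurableSpace Ω]
    (μ : Measure Ω) [IsProbabilityMeasure μ]
    (D : ℕ → Ω → ℕ) (hmeas : ∀ i, Measurable (D i))
    (hindep : iIndepFun D μ)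
    (hident : ∀ i, IdentDistrib (D i) (D 0) μ μ)
    (hpos : ∀ i ω, 1 ≤ D i ω)
    (h0 : 0 < μ {ω | Even (D 0 ω)}) (h1 : μ {ω | Even (D 0 ω)} < 1)
    (hint : Integrable (fun ω => (D 0 ω : ℝ)) μ) :
    Tendsto (fun n => μ {ω | Graphical n (fun i => D i ω)}) atTop (nhds (1 / 2)) := by
  obtain ⟨K, hlarge⟩ := exists_tendsto_measure_lt_four_mul_sum_ite hmeas hindep hident hint
  have heven := tendsto_measure_even_sum hmeas hindep hident h0 h1
  have hlower := ENNReal.Tendsto.sub heven hlarge (Or.inr ENNReal.zero_ne_top)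
  rw [tsub_zero] at hlower
  refine tendsto_of_tendsto_of_tendsto_of_le_of_le' hlower heven ?_
    (Eventually.of_forall fun n => measure_mono fun ω hω => Graphical.even_sum hω)
  filter_upwards [eventually_ge_atTop (4 * (K * (K + 1)))] with n hn
  refine le_measure_sdiff.trans (measure_mono fun ω ⟨hω, hω'⟩ => ?_)
  exact graphical_of_four_mul_le (D · ω) (fun i => hpos i ω) hω (not_lt.mp hω') hn
end

section
/- Let g : [0, ∞) → {1, 2, 3, …} be right-continuous and nondecreasing with g(u) → ∞ as u → ∞, let g⁻¹(n) = inf{u ≥ 0 : g(u) ≥ n}, and let D be the positive-integer-valued random variable with P(D ≥ n) = 1 − exp(−1/g⁻¹(n)). Suppose lim_{n→∞} n·P(D ≥ n) = c with 0 < c < ∞, that 0 < liminf_{n→∞} n²·P(D = n) ≤ limsup_{n→∞} n²·P(D = n) < ∞, and that Σ_{n=1}^∞ |c/n − P(D ≥ n)| < ∞. For 1 ≤ j ≤ n define γ(j, n) = Σ_{i=1}^j g((Σ_{l=1}^i 1/(n−l+1))⁻¹) + Σ_{i=1}^j g(min(j, (Σ_{l=1}^i 1/(n−l+1))⁻¹))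 − n·E[min(j, D)]. Then inf_{n ≥ 1} (1/n)·min_{1 ≤ j ≤ n} γ(j, n) > −∞. -/
open Filter
open scoped ENNReal

/-- `g⁻¹(n) = inf {u ≥ 0 : g(u) ≥ n}`. -/
noncomputable def ginv (g : ℝ → ℕ) (n : ℕ) : ℝ := sInf {u : ℝ | 0 ≤ u ∧ n ≤ g u}

/-- `P(D ≥ n)` for `D = g(1/X)`, `X` a rate-1 exponential:
`P(D ≥ n) = 1 − exp(−1/g⁻¹(n))` (equal to `1` when `g⁻¹(n) = 0`). -/
noncomputable def tailP (g : ℝ → ℕ) (n : ℕ) : ℝ :=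
  if ginv g n = 0 then 1 else 1 - Real.exp (-1 / ginv g n)

/-- `P(D = n) = P(D ≥ n) − P(D ≥ n+1)`. -/
noncomputable def pmfP (g : ℝ → ℕ) (n : ℕ) : ℝ := tailP g n - tailP g (n + 1)

/-- `(∑_{l=1}^i 1/(n−l+1))⁻¹`. -/
noncomputable def harmInv (n i : ℕ) : ℝ := (∑ l ∈ Finset.Icc 1 i, ((n : ℝ) - l + 1)⁻¹)⁻¹

/-- `γ(j,n) = ∑_{i=1}^j g((∑_{l=1}^i 1/(n−l+1))⁻¹)
  + ∑_{i=1}^j g(min(j, (∑_{l=1}^i 1/(n−l+1))⁻¹)) − n·E[min(j,D)]`,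
where `E[min(j,D)] = ∑_{l=1}^j P(D ≥ l)`. -/
noncomputable def gammaJN (g : ℝ → ℕ) (j n : ℕ) : ℝ :=
  (∑ i ∈ Finset.Icc 1 j, (g (harmInv n i) : ℝ))
    + (∑ i ∈ Finset.Icc 1 j, (g (min (j : ℝ) (harmInv n i)) : ℝ))
    - n * ∑ l ∈ Finset.Icc 1 j, tailP g l

/-! Write `t_l = P(D ≥ l)` and `h_i = harmInv n i`. Since `∑_{k<i} 1/(n-k) ≤ log (n/(n-i))`,
every `i < n t_l` has `g⁻¹(l) ≤ h_i`, i.e. `l ≤ g(h_i)`; double counting the pairs `(i, l)` gives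
`∑_{i ≤ j} g(h_i) ≥ ∑_{l ≤ n} min(j, n t_l) - n`. Replacing `t_l` by `c/l` costs at most
`n ∑_l |c/l - t_l| = O(n)`, and what remains, `c n H_j ≤ ∑_{l ≤ n} min(j, cn/l) + O(n)` with `H_j`
the harmonic number, follows from `min(j, cn/l) ≥ cn/(l + cn/j)` by comparing both harmonic-type
sums with logarithms. -/

open Finset Real

theorem le_apply_csInf_of_continuousWithinAt {α β : Type*} [ConditionallyCompleteLinearOrder α]
    [TopologicalSpace α] [OrderTopology α] [TopologicalSpace β] [Preorder β]
    [ClosedIciTopology β] {f : α → β} {s : Set α} (hne : s.Nonempty) (hbdd : BddBelow s)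
    (hf : ContinuousWithinAt f (Set.Ici (sInf s)) (sInf s)) {b : β} (hb : ∀ x ∈ s, b ≤ f x) :
    b ≤ f (sInf s) := by
  have := mem_closure_iff_nhdsWithin_neBot.mp (csInf_mem_closure hne hbdd)
  exact ge_of_tendsto (hf.mono_left (nhdsWithin_mono _ fun x hx => csInf_le hbdd hx))
    (eventually_nhdsWithin_of_forall hb)

theorem ginv_nonneg (g : ℝ → ℕ) (l : ℕ) : 0 ≤ ginv g l :=
  Real.sInf_nonneg fun _ hv => hv.1

theorem le_apply_of_ginv_le {g : ℝ → ℕ} (hmono : MonotoneOn g (Set.Ici 0))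
    (hrc : ∀ x, 0 ≤ x → ContinuousWithinAt g (Set.Ici x) x) (hinf : Tendsto g atTop atTop)
    {l : ℕ} {u : ℝ} (hu : 0 ≤ u) (h : ginv g l ≤ u) : l ≤ g u := by
  have hne : {v : ℝ | 0 ≤ v ∧ l ≤ g v}.Nonempty := by
    obtain ⟨v, hv, hv0⟩ := ((hinf.eventually_ge_atTop l).and (eventually_ge_atTop 0)).exists
    exact ⟨v, hv0, hv⟩
  have hl : l ≤ g (ginv g l) :=
    le_apply_csInf_of_continuousWithinAt hne ⟨0, fun _ hv => hv.1⟩ (hrc _ (ginv_nonneg g l))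
      fun _ hv => hv.2
  exact hl.trans (hmono (ginv_nonneg g l) hu h)

theorem sum_Icc_inv_sub_le_log_sub_log {x : ℝ} {i : ℕ} (hi : (i : ℝ) < x) :
    ∑ l ∈ Icc 1 i, (x - l + 1)⁻¹ ≤ log x - log (x - i) := by
  induction i with
  | zero => simp
  | succ i ih =>
    push_cast at hi ⊢
    have hpos : 0 < x - (i + 1) := by linarith
    have hstep : (x - i)⁻¹ ≤ log (x - i) - log (x - (i + 1)) := by
      have := one_sub_inv_le_log_of_pos (show 0 < (x - i) / (x - (i + 1)) by
        apply div_pos <;> linarith)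
      rw [log_div (by linarith) (by linarith), inv_div] at this
      have heq : 1 - (x - (i + 1)) / (x - i) = (x - i)⁻¹ := by
        field_simp [(by linarith : x - i ≠ 0)]; ring
      linarith
    rw [sum_Icc_succ_top (by omega), show x - (i + 1 : ℕ) + 1 = x - i by push_cast; ring]
    linarith [ih (by linarith)]

theorem log_sub_log_le_sum_Icc_inv {x : ℝ} (hx : 0 ≤ x) (n : ℕ) :
    log (x + n + 1) - log (x + 1) ≤ ∑ l ∈ Icc 1 n, (x + l)⁻¹ := by
  induction n with
  | zero => simp
  | succ n ih =>
    rw [sum_Icc_succ_top (by omega)]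
    have hstep : log (x + (n + 1) + 1) - log (x + n + 1) ≤ (x + (n + 1))⁻¹ := by
      have := log_le_sub_one_of_pos (show 0 < (x + (n + 1) + 1) / (x + n + 1) by positivity)
      rw [log_div (by positivity) (by positivity)] at this
      have heq : (x + (n + 1) + 1) / (x + n + 1) - 1 = (x + (n + 1))⁻¹ := by
        field_simp; ring
      linarith
    push_cast
    linarith

theorem harmInv_nonneg {n i : ℕ} (hin : i ≤ n) : 0 ≤ harmInv n i := by
  refine inv_nonneg.mpr (sum_nonneg fun l hl => inv_nonneg.mpr ?_)
  have : (l : ℝ) ≤ n := by exact_mod_cast (mem_Icc.mp hl).2.trans hin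
  linarith

theorem ginv_le_harmInv {g : ℝ → ℕ} {n i l : ℕ} (hi : 1 ≤ i) (hin : i ≤ n)
    (h : (i : ℝ) < n * tailP g l) : ginv g l ≤ harmInv n i := by
  rcases (ginv_nonneg g l).eq_or_lt with h0 | hpos
  · exact h0 ▸ harmInv_nonneg hin
  have htail : tailP g l = 1 - exp (-1 / ginv g l) := if_neg hpos.ne'
  rw [htail] at h
  have hn : (0 : ℝ) < n := by exact_mod_cast hi.trans hin
  have hexp : n * exp (-1 / ginv g l) < n - i := by linarith
  have hni : (0 : ℝ) < n - i := (mul_pos hn (exp_pos _)).trans hexp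
  have hlog : log n - log (n - i) < 1 / ginv g l := by
    have : -1 / ginv g l < log ((n - i) / n) :=
      (lt_log_iff_exp_lt (by positivity)).mpr (by rwa [lt_div_iff₀ hn, mul_comm])
    rw [log_div hni.ne' hn.ne', neg_div] at this
    linarith
  have hharm : 0 < ∑ l ∈ Icc 1 i, ((n : ℝ) - l + 1)⁻¹ := by
    refine sum_pos (fun l hl => inv_pos.mpr ?_) ⟨1, mem_Icc.mpr ⟨le_rfl, hi⟩⟩
    have : (l : ℝ) ≤ n := by exact_mod_cast (mem_Icc.mp hl).2.trans hin
    linarith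
  rw [harmInv, ← one_div, le_one_div hpos hharm]
  exact (sum_Icc_inv_sub_le_log_sub_log (by linarith)).trans hlog.le

theorem min_sub_one_le_card_filter_lt (j : ℕ) (x : ℝ) :
    min (j : ℝ) x - 1 ≤ #{i ∈ Icc 1 j | ((i : ℕ) : ℝ) < x} := by
  set m := min j (⌈x⌉₊ - 1)
  have hsub : Icc 1 m ⊆ {i ∈ Icc 1 j | ((i : ℕ) : ℝ) < x} := by
    intro i hi
    rw [mem_Icc] at hi
    refine mem_filter.mpr ⟨mem_Icc.mpr ⟨hi.1, hi.2.trans (min_le_left _ _)⟩, ?_⟩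
    exact Nat.lt_ceil.mp (by omega)
  have hceil : x - 1 ≤ ((⌈x⌉₊ - 1 : ℕ) : ℝ) := by
    have : ⌈x⌉₊ ≤ (⌈x⌉₊ - 1) + 1 := by omega
    have : (⌈x⌉₊ : ℝ) ≤ ((⌈x⌉₊ - 1 : ℕ) : ℝ) + 1 := by exact_mod_cast this
    linarith [Nat.le_ceil x]
  calc min (j : ℝ) x - 1 ≤ (m : ℝ) := by
        rw [Nat.cast_min]
        exact le_min (by linarith [min_le_left (j : ℝ) x]) (by linarith [min_le_right (j : ℝ) x])
    _ = #(Icc 1 m) := by simp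
    _ ≤ #{i ∈ Icc 1 j | ((i : ℕ) : ℝ) < x} := by exact_mod_cast card_le_card hsub

theorem sum_min_tailP_sub_le_sum_g_harmInv {g : ℝ → ℕ} (hmono : MonotoneOn g (Set.Ici 0))
    (hrc : ∀ x, 0 ≤ x → ContinuousWithinAt g (Set.Ici x) x) (hinf : Tendsto g atTop atTop)
    {n j : ℕ} (hjn : j ≤ n) :
    ∑ l ∈ Icc 1 n, min (j : ℝ) (n * tailP g l) - n ≤ ∑ i ∈ Icc 1 j, (g (harmInv n i) : ℝ) := by
  have hcount : ∑ l ∈ Icc 1 n, #{i ∈ Icc 1 j | ((i : ℕ) : ℝ) < n * tailP g l}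
      ≤ ∑ i ∈ Icc 1 j, g (harmInv n i) :=
    calc ∑ l ∈ Icc 1 n, #{i ∈ Icc 1 j | ((i : ℕ) : ℝ) < n * tailP g l}
        ≤ ∑ l ∈ Icc 1 n, #{i ∈ Icc 1 j | ginv g l ≤ harmInv n i} := by
          refine sum_le_sum fun l _ => card_le_card fun i hi => ?_
          simp only [mem_filter, mem_Icc] at hi ⊢
          exact ⟨hi.1, ginv_le_harmInv hi.1.1 (hi.1.2.trans hjn) hi.2⟩
      _ = ∑ i ∈ Icc 1 j, #{l ∈ Icc 1 n | ginv g l ≤ harmInv n i} := by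
          simp_rw [card_filter]
          exact sum_comm
      _ ≤ ∑ i ∈ Icc 1 j, g (harmInv n i) := by
          refine sum_le_sum fun i hi => ?_
          have hh := harmInv_nonneg ((mem_Icc.mp hi).2.trans hjn)
          calc #{l ∈ Icc 1 n | ginv g l ≤ harmInv n i} ≤ #(Icc 1 (g (harmInv n i))) :=
                card_le_card fun l hl => by
                  simp only [mem_filter, mem_Icc] at hl ⊢
                  exact ⟨hl.1.1, le_apply_of_ginv_le hmono hrc hinf hh hl.2⟩
            _ = g (harmInv n i) := by simp
  calc ∑ l ∈ Icc 1 n, min (j : ℝ) (n * tailP g l) - n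
      = ∑ l ∈ Icc 1 n, (min (j : ℝ) (n * tailP g l) - 1) := by simp [sum_sub_distrib]
    _ ≤ ∑ l ∈ Icc 1 n, (#{i ∈ Icc 1 j | ((i : ℕ) : ℝ) < n * tailP g l} : ℝ) :=
        sum_le_sum fun l _ => min_sub_one_le_card_filter_lt j _
    _ ≤ ∑ i ∈ Icc 1 j, (g (harmInv n i) : ℝ) := by exact_mod_cast hcount

theorem sum_min_mul_le_sum_min_mul_add {ι : Type*} (s : Finset ι) (a : ℝ) {k : ℝ} (hk : 0 ≤ k)
    (x y : ι → ℝ) :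
    ∑ i ∈ s, min a (k * x i) ≤ ∑ i ∈ s, min a (k * y i) + k * ∑ i ∈ s, |x i - y i| := by
  rw [mul_sum, ← sum_add_distrib]
  refine sum_le_sum fun i _ => ?_
  have := abs_min_sub_min_le_max a (k * x i) a (k * y i)
  rw [sub_self, abs_zero, max_eq_right (abs_nonneg _), ← mul_sub, abs_mul, abs_of_nonneg hk]
    at this
  linarith [le_abs_self (min a (k * x i) - min a (k * y i))]

theorem sum_Icc_le_mul_harmonic_add (t : ℕ → ℝ) (c : ℝ) (j : ℕ) :
    ∑ l ∈ Icc 1 j, t l ≤ c * harmonic j + ∑ l ∈ Icc 1 j, |c / l - t l| := by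
  rw [harmonic_eq_sum_Icc]
  push_cast
  rw [mul_sum, ← sum_add_distrib]
  simp only [div_eq_mul_inv]
  exact sum_le_sum fun l _ => by linarith [neg_abs_le (c * (l : ℝ)⁻¹ - t l)]

theorem mul_harmonic_le_sum_min_add {c : ℝ} (hc : 0 ≤ c) {n j : ℕ} (hj : 1 ≤ j) (hjn : j ≤ n) :
    c * n * harmonic j ≤ ∑ l ∈ Icc 1 n, min (j : ℝ) (n * (c / l)) + c * (1 + log (c + 1)) * n := by
  have hjpos : (0 : ℝ) < j := by exact_mod_cast hj
  have hjn' : (j : ℝ) ≤ n := by exact_mod_cast hjn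
  set L := c * n / j
  have hL : 0 ≤ L := by positivity
  have hjL : j * L = c * n := mul_div_cancel₀ _ hjpos.ne'
  have hmin : c * n * ∑ l ∈ Icc 1 n, (L + l)⁻¹ ≤ ∑ l ∈ Icc 1 n, min (j : ℝ) (n * (c / l)) := by
    rw [mul_sum]
    refine sum_le_sum fun l hl => ?_
    have hl : (0 : ℝ) < l := by exact_mod_cast (mem_Icc.mp hl).1
    rw [← div_eq_mul_inv, ← mul_div_assoc, mul_comm (n : ℝ) c]
    refine le_min ?_ (div_le_div_of_nonneg_left (by positivity) hl (by linarith))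
    rw [div_le_iff₀ (by positivity), mul_add, hjL]
    linarith [mul_pos hjpos hl]
  have hlog : log j + log (L + 1) ≤ log (c + 1) + log (L + n + 1) := by
    rw [← log_mul (by positivity) (by positivity), ← log_mul (by positivity) (by positivity)]
    refine log_le_log (by positivity) ?_
    rw [mul_add, hjL]
    nlinarith [mul_nonneg hc hL]
  have hharm : (harmonic j : ℝ) ≤ 1 + log j := harmonic_le_one_add_log j
  have hshift := log_sub_log_le_sum_Icc_inv hL n
  have hcn : 0 ≤ c * n := by positivity
  have := mul_le_mul_of_nonneg_left hharm hcn
  have := mul_le_mul_of_nonneg_left hshift hcn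
  have := mul_le_mul_of_nonneg_left hlog hcn
  linarith

theorem gammaJN_bounded_below_general (g : ℝ → ℕ)
    (hmono : MonotoneOn g (Set.Ici 0))
    (hrc : ∀ x, 0 ≤ x → ContinuousWithinAt g (Set.Ici x) x)
    (hinf : Tendsto g atTop atTop)
    (c : ℝ) (hc : 0 < c)
    (hsum : Summable fun n : ℕ => |c / (n + 1) - tailP g (n + 1)|) :
    ∃ B : ℝ, ∀ n j : ℕ, 1 ≤ j → j ≤ n → B ≤ gammaJN g j n / n := by
  have hS : ∀ m, ∑ l ∈ Icc 1 m, |c / l - tailP g l| ≤ ∑' l : ℕ, |c / l - tailP g l| := fun m =>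
    ((summable_nat_add_iff 1).mp (by simpa using hsum)).sum_le_tsum _ fun _ _ => abs_nonneg _
  refine ⟨-(1 + 2 * ∑' l : ℕ, |c / l - tailP g l| + c * (1 + log (c + 1))), fun n j hj hjn => ?_⟩
  have hn : (0 : ℝ) < n := by exact_mod_cast hj.trans hjn
  have hfirst := sum_min_tailP_sub_le_sum_g_harmInv hmono hrc hinf hjn
  have hsecond : 0 ≤ ∑ i ∈ Icc 1 j, (g (min (j : ℝ) (harmInv n i)) : ℝ) := by positivity
  have hcompare := sum_min_mul_le_sum_min_mul_add (Icc 1 n) j hn.le (fun l => c / l) (tailP g)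
  have htail := sum_Icc_le_mul_harmonic_add (tailP g) c j
  have hcore := mul_harmonic_le_sum_min_add hc.le hj hjn
  rw [le_div_iff₀ hn, gammaJN]
  linarith [mul_le_mul_of_nonneg_left htail hn.le, mul_le_mul_of_nonneg_left (hS j) hn.le,
    mul_le_mul_of_nonneg_left (hS n) hn.le]

/-- Lemma 3: under the hypotheses of part (c),
`inf_{n ≥ 1} (1/n) min_{1 ≤ j ≤ n} γ(j,n) > −∞`. -/
theorem gammaJN_bounded_below (g : ℝ → ℕ)
    (hg1 : ∀ x, 0 ≤ x → 1 ≤ g x)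
    (hmono : MonotoneOn g (Set.Ici 0))
    (hrc : ∀ x, 0 ≤ x → ContinuousWithinAt g (Set.Ici x) x)
    (hinf : Tendsto g atTop atTop)
    (c : ℝ) (hc : 0 < c)
    (htail : Tendsto (fun n : ℕ => (n : ℝ) * tailP g n) atTop (nhds c))
    (hliminf : 0 < liminf (fun n : ℕ => ENNReal.ofReal ((n : ℝ) ^ 2 * pmfP g n)) atTop)
    (hlimsup : limsup (fun n : ℕ => ENNReal.ofReal ((n : ℝ) ^ 2 * pmfP g n)) atTop < ⊤)
    (hsum : Summable fun n : ℕ => |c / (n + 1) - tailP g (n + 1)|) :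
    ∃ B : ℝ, ∀ n j : ℕ, 1 ≤ j → j ≤ n → B ≤ gammaJN g j n / n :=
  gammaJN_bounded_below_general g hmono hrc hinf c hc hsum
end
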